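/- arXiv:math/9905112 — 2 statements merged into one kernel-verified Lean document; each statement's English description precedes it below -/
import Mathlib

section
/- Let q ∈ ℂ ∖ {0, 1} and let a, c, d, b ∈ ℂ with a ≠ c. Let A = P(a, c) (the idempotent with kernel spanned by (a,1)ᵀ and image spanned by (c,1)ᵀ), and suppose there exists t ∈ ℂ such that (I − q⁻¹·A)·(d, 1)ᵀ = t·(b, 1)ᵀ. Then (d − a)·(c − b) = q·(a − c)·(b − d); that is, with a = z_{k,m}, c = z_{k+1,m}, d = z_{k,m+1}, b = z_{k+1,m+1}, the cross-ratio [z_{k,m+1} : z_{k,m} : z_{k+1,m} : z_{k+1,m+1}] equals q. (This is the elementary computation concluding the proof of Proposition 3.8: a matrix A with kernel z_{k,m}, image z_{k+1,m} = kernel(I − A), such that I − q⁻¹A maps z_{k,m+1} to z_{k+1,m+1}, forces the cross-ratio condition.) -/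
open Matrix

/-- For distinct `u w : ℂ`, `Pmat u w = (w − u)⁻¹ • [[w, −u·w], [1, −u]]` is the unique
idempotent 2×2 matrix with kernel spanned by `(u, 1)ᵀ` and image spanned by `(w, 1)ᵀ`. -/
noncomputable def Pmat (u w : ℂ) : Matrix (Fin 2) (Fin 2) ℂ :=
  (w - u)⁻¹ • !![w, -(u * w); 1, -u]

/- Holds also for `u = w`, where the junk value `0⁻¹ = 0` makes both sides vanish. -/
theorem Pmat_mulVec (u w z : ℂ) :
    Pmat u w *ᵥ ![z, 1] = ((z - u) / (w - u)) • ![w, 1] := by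
  ext i
  fin_cases i <;>
    simp only [Pmat, mulVec, dotProduct, Fin.sum_univ_two, Matrix.smul_apply, of_apply,
      Fin.zero_eta, Fin.mk_one, cons_val_fin_one, cons_val_zero, cons_val_one, Pi.smul_apply,
      smul_eq_mul] <;> ring

theorem sub_eq_mul_sub_of_vec_sub_smul_eq_smul {R : Type*} [CommRing R] {x y z s t : R}
    (h : ![x, 1] - s • ![y, 1] = t • ![z, 1]) : x - z = s * (y - z) := by
  have hx : x - s * y = t * z := by simpa using congrFun h 0
  have ht : 1 - s = t := by simpa using congrFun h 1
  linear_combination hx - z * ht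

theorem proj_forces_crossRatio_general (q a c d b : ℂ) (hq0 : q ≠ 0)
    (hac : a ≠ c) (t : ℂ)
    (ht : ((1 : Matrix (Fin 2) (Fin 2) ℂ) - q⁻¹ • Pmat a c) *ᵥ ![d, 1] = t • ![b, 1]) :
    (d - a) * (c - b) = q * ((a - c) * (b - d)) := by
  rw [sub_mulVec, one_mulVec, smul_mulVec, Pmat_mulVec, smul_smul] at ht
  have hdb := sub_eq_mul_sub_of_vec_sub_smul_eq_smul ht
  have hca : c - a ≠ 0 := sub_ne_zero.mpr hac.symm
  field_simp at hdb
  linear_combination -hdb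

/-- The elementary computation concluding Proposition 3.8: if `A = P(a, c)` and
`(I − q⁻¹·A)·(d, 1)ᵀ = t·(b, 1)ᵀ` for some `t`, then `(d − a)·(c − b) = q·(a − c)·(b − d)`,
i.e. the cross-ratio `[d : a : c : b] = q`. -/
theorem proj_forces_crossRatio (q a c d b : ℂ) (hq0 : q ≠ 0) (hq1 : q ≠ 1)
    (hac : a ≠ c) (t : ℂ)
    (ht : ((1 : Matrix (Fin 2) (Fin 2) ℂ) - q⁻¹ • Pmat a c) *ᵥ ![d, 1] = t • ![b, 1]) :
    (d - a) * (c - b) = q * ((a - c) * (b - d)) :=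
  proj_forces_crossRatio_general q a c d b hq0 hac t ht
end

section
/- Let a, b, ε, y ∈ ℂ ∖ {0} with a ∉ {y, −y}, b ∉ {y, −y}, ε ∉ {y, −y}, and let z_{k,m} = h_{k,m}(y). Then for an integer n ≥ 1, the map z is periodic with period n in the first variable (i.e. z_{k+n,m} = z_{k,m} for all (k, m) ∈ ℤ²) if and only if n is even and ((a − y)/(a + y))ⁿ = 1. -/
noncomputable def hfun (a b ε y : ℂ) (k m : ℤ) : ℂ :=
  ((a - y) / (a + y)) ^ k * ((b - y) / (b + y)) ^ m *
    (if Even (k + m) then 1 else (ε + y) / (ε - y))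

/-!
Restricted to the row `m = 0`, periodicity gives `A ^ n * E ^ δ(n) = 1` and
`A ^ (n + 1) * E ^ δ(n + 1) = A * E`. For odd `n` these say `A ^ n * E = 1` and `A ^ n = E`,
hence `E ^ 2 = 1`, which `ε ≠ 0` and `y ≠ 0` exclude. For even `n` the first one is `A ^ n = 1`,
and conversely an even `n` with `A ^ n = 1` preserves both `A ^ k` and the parity of `k + m`.
-/

section Zigzag

variable {G₀ : Type*} [CommGroupWithZero G₀]

def zigzag (A B E : G₀) (k m : ℤ) : G₀ :=
  A ^ k * B ^ m * if Even (k + m) then 1 else E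

lemma zpow_add_natCast_of_pow_eq_one {A : G₀} {n : ℕ} (hA : A ^ n = 1) (k : ℤ) :
    A ^ (k + n) = A ^ k := by
  rcases eq_or_ne n 0 with rfl | hn
  · simp
  · have hA0 : A ≠ 0 := by
      rintro rfl
      simp [zero_pow hn] at hA
    rw [zpow_add₀ hA0, zpow_natCast, hA, mul_one]

lemma zigzag_add_left_of_even {A B E : G₀} {n : ℕ} (hn : Even n) (hA : A ^ n = 1) (k m : ℤ) :
    zigzag A B E (k + n) m = zigzag A B E k m := by
  have hparity : Even (k + n + m) ↔ Even (k + m) := by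
    rw [add_right_comm, Int.even_add, Int.even_coe_nat, iff_true_intro hn, iff_true]
  simp only [zigzag, zpow_add_natCast_of_pow_eq_one hA, hparity]

lemma sq_eq_one_of_odd {A E : G₀} {n : ℕ} (hn : Odd n) (h₀ : A ^ n * E = 1)
    (h₁ : A ^ (n + 1) = A * E) : E ^ 2 = 1 := by
  have hA0 : A ≠ 0 := by
    rintro rfl
    simp [zero_pow hn.pos.ne'] at h₀
  have hAn : A ^ n = E := mul_left_cancel₀ hA0 (by rw [← pow_succ', h₁])
  rw [sq, ← h₀, hAn]

theorem zigzag_periodic_iff_of_sq_ne_one {A B E : G₀} (hE : E ^ 2 ≠ 1) (n : ℕ) :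
    (∀ k m : ℤ, zigzag A B E (k + n) m = zigzag A B E k m) ↔ Even n ∧ A ^ n = 1 := by
  refine ⟨fun h => ?_, fun ⟨hn, hA⟩ => zigzag_add_left_of_even hn hA⟩
  rcases Nat.even_or_odd n with hn | hn
  · exact ⟨hn, by simpa [zigzag, Int.even_coe_nat, hn] using h 0 0⟩
  · have h₀ : A ^ n * E = 1 := by
      simpa [zigzag, Int.even_coe_nat, Nat.not_even_iff_odd.mpr hn] using h 0 0
    have h₁ : A ^ (n + 1) = A * E := by
      have h₁ := h 1 0
      rw [add_comm, ← Nat.cast_add_one] at h₁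
      simpa only [zigzag, Int.even_coe_nat, hn.add_one, zpow_natCast, add_zero, zpow_zero, mul_one,
        zpow_one, Int.not_even_one, if_true, if_false] using h₁
    exact absurd (sq_eq_one_of_odd hn h₀ h₁) hE

end Zigzag

lemma div_sq_ne_one_of_ne_zero {K : Type*} [Field K] [NeZero (2 : K)] {ε y : K}
    (hε : ε ≠ 0) (hy : y ≠ 0) : ((ε + y) / (ε - y)) ^ 2 ≠ 1 := by
  rcases eq_or_ne (ε - y) 0 with h0 | h0
  · simp [h0] -- division by zero makes the quotient `0`
  rw [sq_ne_one_iff, Ne, Ne, div_eq_one_iff_eq h0, div_eq_iff h0]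
  refine ⟨fun h => hy ?_, fun h => hε ?_⟩
  · exact (mul_eq_zero.mp (by linear_combination h : (2 : K) * y = 0)).resolve_left two_ne_zero
  · exact (mul_eq_zero.mp (by linear_combination h : (2 : K) * ε = 0)).resolve_left two_ne_zero

theorem zigzag_periodic_iff_general (a b ε y : ℂ)
    (he0 : ε ≠ 0) (hy0 : y ≠ 0)
    (n : ℕ) :
    (∀ k m : ℤ, hfun a b ε y (k + n) m = hfun a b ε y k m) ↔
      (Even n ∧ ((a - y) / (a + y)) ^ n = 1) :=
  zigzag_periodic_iff_of_sq_ne_one (div_sq_ne_one_of_ne_zero he0 hy0) n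

/-- The zigzag map `z_{k,m} = h_{k,m}(y)` is periodic with period `n ≥ 1` in the
first variable if and only if `n` is even and `((a − y)/(a + y))ⁿ = 1`. -/
theorem zigzag_periodic_iff (a b ε y : ℂ)
    (ha0 : a ≠ 0) (hb0 : b ≠ 0) (he0 : ε ≠ 0) (hy0 : y ≠ 0)
    (hay : a ≠ y) (hay' : a ≠ -y) (hby : b ≠ y) (hby' : b ≠ -y)
    (hey : ε ≠ y) (hey' : ε ≠ -y)
    (n : ℕ) (hn : 1 ≤ n) :
    (∀ k m : ℤ, hfun a b ε y (k + n) m = hfun a b ε y k m) ↔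
      (Even n ∧ ((a - y) / (a + y)) ^ n = 1) :=
  zigzag_periodic_iff_general a b ε y he0 hy0 n
end
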